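/- Let a, b : [0,1] → ℝ be continuous and define the bounded linear operator L on L²(0,1) by (Lh)(t) = -a(t)·∫₀¹ K(t,s)h(s) ds - b(t)·∫₀¹ K_t(t,s)h(s) ds. Then I + L is invertible on L²(0,1) if and only if for every y ∈ L²(0,1) there exists a unique continuously differentiable ξ : [0,1] → ℝ with ξ' absolutely continuous, ξ(0) = ξ(1) = 0, and ξ''(t) + b(t)ξ'(t) + a(t)ξ(t) = y(t) for almost every t ∈ [0,1]. -/

import Mathlib

/-!
For `h ∈ L¹(0,1)` put `ξ_h = ∫₀¹ K(·,s) h(s) ds` and `η_h = ∫₀¹ K_t(·,s) h(s) ds`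
(`kernelOp Kgreen h` and `kernelOp KgreenT h`). Differentiating under the integral sign gives
`ξ_h' = η_h`, and `η_h(t) = η_h(0) - ∫₀ᵗ h`, so `ξ_h` solves `ξ'' = -h` with zero boundary values;
conversely every solution `ξ` of the boundary value problem equals `ξ_{-ξ''}`, because the
difference is affine and vanishes at both ends. Hence `ξ ↦ -ξ''` matches the solutions for the
right-hand side `y` with the `h ∈ L²` satisfying `h + L h = -y` (here `-ξ'' = b ξ' + a ξ - y` lies
in `L²` because `a` and `b` are continuous), and unique solvability for every `y` is bijectivity
of `I + L`.
-/

open MeasureTheory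

noncomputable def Kgreen (t s : ℝ) : ℝ := min t s - t * s

noncomputable def KgreenT (t s : ℝ) : ℝ := if t < s then 1 - s else -s

/-- `ξ` (with continuous derivative `ξ'` and a.e. second derivative `ξ''`, `ξ'` being
absolutely continuous) solves `ξ'' + b ξ' + a ξ = y` a.e. on `(0,1)` with
`ξ(0) = ξ(1) = 0`. -/
def SolLinBVP (a b y : ℝ → ℝ) (ξ ξ' ξ'' : ℝ → ℝ) : Prop :=
  (∀ t ∈ Set.Icc (0:ℝ) 1, HasDerivWithinAt ξ (ξ' t) (Set.Icc 0 1) t) ∧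
  ContinuousOn ξ' (Set.Icc 0 1) ∧
  IntervalIntegrable ξ'' volume 0 1 ∧
  (∀ t ∈ Set.Icc (0:ℝ) 1, ξ' t = ξ' 0 + ∫ s in (0:ℝ)..t, ξ'' s) ∧
  ξ 0 = 0 ∧ ξ 1 = 0 ∧
  (∀ᵐ t ∂(volume.restrict (Set.Ioo (0:ℝ) 1)), ξ'' t + b t * ξ' t + a t * ξ t = y t)

open Set Filter Topology intervalIntegral
open scoped ENNReal

noncomputable def kernelOp (K : ℝ → ℝ → ℝ) (h : ℝ → ℝ) (t : ℝ) : ℝ :=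
  ∫ s in (0:ℝ)..1, K t s * h s

lemma kernelOp_congr_ae {K : ℝ → ℝ → ℝ} {h h' : ℝ → ℝ}
    (hh : h =ᵐ[volume.restrict (Ioo (0:ℝ) 1)] h') : kernelOp K h = kernelOp K h' := by
  funext t
  refine integral_congr_ae ?_
  rw [uIoc_of_le zero_le_one, ← ae_restrict_iff' measurableSet_Ioc,
    ← Measure.restrict_congr_set Ioo_ae_eq_Ioc]
  filter_upwards [hh] with s hs
  rw [hs]

lemma MeasureTheory.Lp.intervalIntegrable {p : ℝ≥0∞} [Fact (1 ≤ p)] {a b : ℝ} (hab : a ≤ b)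
    (f : Lp ℝ p (volume.restrict (Ioo a b))) : IntervalIntegrable f volume a b := by
  rw [intervalIntegrable_iff_integrableOn_Ioo_of_le hab]
  exact (Lp.memLp f).integrable Fact.out

lemma memLp_of_continuousOn_Icc {f : ℝ → ℝ} {p : ℝ≥0∞} {a b : ℝ}
    (hf : ContinuousOn f (Icc a b)) : MemLp f p (volume.restrict (Ioo a b)) := by
  obtain ⟨C, hC⟩ := isCompact_Icc.exists_bound_of_continuousOn hf
  refine MemLp.of_bound ((hf.mono Ioo_subset_Icc_self).aestronglyMeasurable measurableSet_Ioo) C ?_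
  filter_upwards [ae_restrict_mem measurableSet_Ioo] with t ht using hC t (Ioo_subset_Icc_self ht)

lemma continuous_Kgreen (t : ℝ) : Continuous (Kgreen t) := by
  unfold Kgreen; fun_prop

lemma measurable_KgreenT (t : ℝ) : Measurable (KgreenT t) :=
  Measurable.ite measurableSet_Ioi (measurable_const.sub measurable_id) measurable_id.neg

lemma Kgreen_zero_left {s : ℝ} (hs : 0 ≤ s) : Kgreen 0 s = 0 := by
  simp [Kgreen, hs]

lemma Kgreen_one_left {s : ℝ} (hs : s ≤ 1) : Kgreen 1 s = 0 := by
  simp [Kgreen, hs]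

lemma hasDerivAt_Kgreen {t s : ℝ} (hts : t ≠ s) : HasDerivAt (Kgreen · s) (KgreenT t s) t := by
  rcases hts.lt_or_gt with hlt | hgt
  · have hK : (Kgreen · s) =ᶠ[𝓝 t] fun u => u - u * s := by
      filter_upwards [Iio_mem_nhds hlt] with u hu
      simp [Kgreen, min_eq_left (mem_Iio.1 hu).le]
    simpa [KgreenT, hlt] using
      ((hasDerivAt_id t).sub ((hasDerivAt_id t).mul_const s)).congr_of_eventuallyEq hK
  · have hK : (Kgreen · s) =ᶠ[𝓝 t] fun u => s - u * s := by
      filter_upwards [Ioi_mem_nhds hgt] with u hu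
      simp [Kgreen, min_eq_right (mem_Ioi.1 hu).le]
    simpa [KgreenT, hgt.not_gt] using
      ((hasDerivAt_const t s).sub ((hasDerivAt_id t).mul_const s)).congr_of_eventuallyEq hK

lemma lipschitzWith_Kgreen {s : ℝ} (hs : s ∈ Icc (0:ℝ) 1) : LipschitzWith 2 (Kgreen · s) := by
  refine LipschitzWith.of_dist_le_mul fun x y => ?_
  have hmin := abs_min_sub_min_le_max x s y s
  rw [sub_self, abs_zero, max_eq_left (abs_nonneg _)] at hmin
  have hmul : |x * s - y * s| ≤ |x - y| := by
    rw [← sub_mul, abs_mul]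
    exact mul_le_of_le_one_right (abs_nonneg _) (abs_le.2 ⟨by linarith [hs.1], hs.2⟩)
  simp only [Real.dist_eq, Kgreen, NNReal.coe_ofNat]
  calc |min x s - x * s - (min y s - y * s)| ≤ |min x s - min y s| + |x * s - y * s| := by
        rw [sub_sub_sub_comm]; exact abs_sub _ _
    _ ≤ 2 * |x - y| := by linarith

lemma kernelOp_Kgreen_zero (h : ℝ → ℝ) : kernelOp Kgreen h 0 = 0 := by
  rw [kernelOp, integral_congr (g := fun _ => 0) fun s hs => ?_, intervalIntegral.integral_zero]
  rw [uIcc_of_le zero_le_one] at hs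
  simp [Kgreen_zero_left hs.1]

lemma kernelOp_Kgreen_one (h : ℝ → ℝ) : kernelOp Kgreen h 1 = 0 := by
  rw [kernelOp, integral_congr (g := fun _ => 0) fun s hs => ?_, intervalIntegral.integral_zero]
  rw [uIcc_of_le zero_le_one] at hs
  simp [Kgreen_one_left hs.2]

section GreenFunction

variable {h : ℝ → ℝ}

/-- `Kgreen · s` is `2`-Lipschitz and differentiable off `s`, which allows differentiation under
the integral sign. -/
lemma hasDerivAt_kernelOp_Kgreen (hh : IntervalIntegrable h volume 0 1) (t : ℝ) :
    HasDerivAt (kernelOp Kgreen h) (kernelOp KgreenT h t) t := by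
  have hmeas := hh.def'.aestronglyMeasurable
  refine (hasDerivAt_integral_of_dominated_loc_of_lip (F := fun x s => Kgreen x s * h s)
    (bound := fun s => 2 * h s) univ_mem
    (.of_forall fun x => (continuous_Kgreen x).aestronglyMeasurable.mul hmeas)
    (hh.continuousOn_mul (continuous_Kgreen t).continuousOn)
    ((measurable_KgreenT t).aestronglyMeasurable.mul hmeas) ?_ (hh.const_mul 2) ?_).2
  · refine ae_of_all _ fun s hs => LipschitzOnWith.of_dist_le_mul fun x _ y _ => ?_
    rw [uIoc_of_le zero_le_one] at hs
    have hK := (lipschitzWith_Kgreen (Ioc_subset_Icc_self hs)).dist_le_mul x y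
    rw [Real.dist_eq, ← sub_mul, abs_mul, Real.coe_nnabs, abs_mul, abs_two, mul_right_comm]
    rw [Real.dist_eq, NNReal.coe_ofNat] at hK
    exact mul_le_mul_of_nonneg_right hK (abs_nonneg _)
  · filter_upwards [volume.ae_ne t] with s hs _
    exact (hasDerivAt_Kgreen hs.symm).mul_const (h s)

lemma kernelOp_KgreenT_of_mem (hh : IntervalIntegrable h volume 0 1) {t : ℝ}
    (ht : t ∈ Icc (0:ℝ) 1) :
    kernelOp KgreenT h t = (∫ s in (0:ℝ)..1, (1 - s) * h s) - ∫ s in (0:ℝ)..t, h s := by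
  have hK : ∀ s, KgreenT t s * h s = (1 - s) * h s - (Iic t).indicator h s := by
    intro s
    by_cases hst : s ≤ t
    · simp only [KgreenT, not_lt.2 hst, ↓reduceIte, mem_Iic, hst, indicator_of_mem]
      ring
    · simp [KgreenT, hst, not_le.1 hst]
  have hind : ∫ s in (0:ℝ)..1, (Iic t).indicator h s = ∫ s in (0:ℝ)..t, h s := by
    rw [integral_of_le zero_le_one, integral_of_le ht.1, setIntegral_indicator measurableSet_Iic,
      Ioc_inter_Iic, inf_eq_right.2 ht.2]
  simp only [kernelOp, hK]
  rw [integral_sub (hh.continuousOn_mul (by fun_prop))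
    (intervalIntegrable_iff.2 (hh.def'.indicator measurableSet_Iic)), hind]

lemma kernelOp_KgreenT_eq_add_integral (hh : IntervalIntegrable h volume 0 1) {t : ℝ}
    (ht : t ∈ Icc (0:ℝ) 1) :
    kernelOp KgreenT h t = kernelOp KgreenT h 0 + ∫ s in (0:ℝ)..t, (-h) s := by
  rw [kernelOp_KgreenT_of_mem hh ht, kernelOp_KgreenT_of_mem hh ⟨le_rfl, zero_le_one⟩,
    integral_same, Pi.neg_def, intervalIntegral.integral_neg]
  ring

lemma continuousOn_kernelOp_KgreenT (hh : IntervalIntegrable h volume 0 1) :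
    ContinuousOn (kernelOp KgreenT h) (Icc 0 1) := by
  have hprim := continuousOn_primitive_interval ((intervalIntegrable_iff' (f := -h)).1 hh.neg)
  rw [uIcc_of_le zero_le_one] at hprim
  exact (continuousOn_const.add hprim).congr fun t ht => kernelOp_KgreenT_eq_add_integral hh ht

lemma solLinBVP_kernelOp {a b y : ℝ → ℝ} (hh : IntervalIntegrable h volume 0 1)
    (hode : ∀ᵐ t ∂(volume.restrict (Ioo (0:ℝ) 1)),
      -h t + b t * kernelOp KgreenT h t + a t * kernelOp Kgreen h t = y t) :
    SolLinBVP a b y (kernelOp Kgreen h) (kernelOp KgreenT h) (-h) :=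
  ⟨fun t _ => (hasDerivAt_kernelOp_Kgreen hh t).hasDerivWithinAt,
    continuousOn_kernelOp_KgreenT hh, hh.neg, fun _ ht => kernelOp_KgreenT_eq_add_integral hh ht,
    kernelOp_Kgreen_zero h, kernelOp_Kgreen_one h, hode⟩

end GreenFunction

lemma SolLinBVP.eqOn_kernelOp {a b y ξ ξ' ξ'' : ℝ → ℝ} (hξ : SolLinBVP a b y ξ ξ' ξ'') :
    EqOn ξ (kernelOp Kgreen (-ξ'')) (Icc 0 1) ∧ EqOn ξ' (kernelOp KgreenT (-ξ'')) (Icc 0 1) := by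
  obtain ⟨hd, -, hi, hprim, h0, h1, -⟩ := hξ
  set c := kernelOp KgreenT (-ξ'') 0 - ξ' 0
  have hη : ∀ t ∈ Icc (0:ℝ) 1, kernelOp KgreenT (-ξ'') t = ξ' t + c := by
    intro t ht
    rw [kernelOp_KgreenT_eq_add_integral hi.neg ht, hprim t ht, neg_neg]
    ring
  have hξc : ∀ t ∈ Icc (0:ℝ) 1, kernelOp Kgreen (-ξ'') t = ξ t + t * c := by
    have hK := hasDerivAt_kernelOp_Kgreen hi.neg
    refine eq_of_has_deriv_right_eq (fun t _ => (hK t).hasDerivWithinAt) (fun t ht => ?_)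
      (fun t _ => (hK t).continuousAt.continuousWithinAt)
      (fun t ht => (hd t ht).continuousWithinAt.add (by fun_prop))
      (by simp [kernelOp_Kgreen_zero, h0])
    rw [hη t (Ico_subset_Icc_self ht)]
    exact ((hd t (Ico_subset_Icc_self ht)).mono_of_mem_nhdsWithin
      (Icc_mem_nhdsGE_of_mem ht)).add ((hasDerivAt_mul_const c).hasDerivWithinAt (s := Ici t))
  have hc : 0 = c := by simpa [kernelOp_Kgreen_one, h1] using hξc 1 ⟨zero_le_one, le_rfl⟩
  exact ⟨fun t ht => by simp [hξc t ht, ← hc], fun t ht => by simp [hη t ht, ← hc]⟩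

local notation "L²" => Lp ℝ 2 (volume.restrict (Ioo (0:ℝ) 1))

section Operator

variable {a b : ℝ → ℝ} {L : L² →L[ℝ] L²}
  (hL : ∀ g : L², ∀ᵐ t ∂(volume.restrict (Ioo (0:ℝ) 1)),
    L g t = -(a t) * kernelOp Kgreen g t - b t * kernelOp KgreenT g t)
include hL

lemma add_apply_eq_neg_iff (x y : L²) :
    x + L x = -y ↔ ∀ᵐ t ∂(volume.restrict (Ioo (0:ℝ) 1)),
      -x t + b t * kernelOp KgreenT x t + a t * kernelOp Kgreen x t = y t := by
  rw [Lp.ext_iff]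
  refine eventually_congr ?_
  filter_upwards [Lp.coeFn_add x (L x), hL x, Lp.coeFn_neg y] with t hadd hLx hneg
  rw [hadd, hneg, Pi.add_apply, Pi.neg_apply, hLx]
  constructor <;> intro <;> linarith

lemma SolLinBVP.exists_add_apply_eq_neg (ha : ContinuousOn a (Icc 0 1))
    (hb : ContinuousOn b (Icc 0 1)) {y : L²} {ξ ξ' ξ'' : ℝ → ℝ} (hξ : SolLinBVP a b y ξ ξ' ξ'') :
    ∃ x : L², x + L x = -y ∧ EqOn ξ (kernelOp Kgreen x) (Icc 0 1) := by
  obtain ⟨hξK, hξ'K⟩ := hξ.eqOn_kernelOp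
  obtain ⟨hd, hc, -, -, -, -, hode⟩ := hξ
  have hmem : MemLp (fun t => b t * ξ' t + a t * ξ t - y t) 2 (volume.restrict (Ioo (0:ℝ) 1)) :=
    (memLp_of_continuousOn_Icc ((hb.mul hc).add
      (ha.mul fun t ht => (hd t ht).continuousWithinAt))).sub (Lp.memLp y)
  have hx : ⇑hmem.toLp =ᵐ[volume.restrict (Ioo (0:ℝ) 1)] -ξ'' := by
    filter_upwards [hmem.coeFn_toLp, hode] with t hxt hodet
    rw [hxt, Pi.neg_apply]
    linarith
  refine ⟨hmem.toLp, (add_apply_eq_neg_iff hL _ y).2 ?_, by rwa [kernelOp_congr_ae hx]⟩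
  filter_upwards [hx, hode, ae_restrict_mem measurableSet_Ioo] with t hxt hodet ht
  rw [kernelOp_congr_ae hx, kernelOp_congr_ae hx, hxt, ← hξK (Ioo_subset_Icc_self ht),
    ← hξ'K (Ioo_subset_Icc_self ht), Pi.neg_apply, neg_neg]
  exact hodet

lemma eq_of_add_apply_eq_of_eqOn {x₁ x₂ : L²} (h : x₁ + L x₁ = x₂ + L x₂)
    (hξ : EqOn (kernelOp Kgreen x₁) (kernelOp Kgreen x₂) (Icc 0 1)) : x₁ = x₂ := by
  have h₁ := (add_apply_eq_neg_iff hL x₁ _).1 (h.trans (neg_neg _).symm)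
  have h₂ := (add_apply_eq_neg_iff hL x₂ _).1 (neg_neg _).symm
  have hη : EqOn (kernelOp KgreenT x₁) (kernelOp KgreenT x₂) (Ioo 0 1) := fun t ht =>
    (hasDerivAt_kernelOp_Kgreen (Lp.intervalIntegrable zero_le_one x₁) t).unique
      ((hasDerivAt_kernelOp_Kgreen (Lp.intervalIntegrable zero_le_one x₂) t).congr_of_eventuallyEq
        (eventuallyEq_of_mem (Icc_mem_nhds ht.1 ht.2) hξ))
  refine Lp.ext ?_
  filter_upwards [h₁, h₂, ae_restrict_mem measurableSet_Ioo] with t e₁ e₂ ht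
  rw [hξ (Ioo_subset_Icc_self ht), hη ht] at e₁
  linarith

end Operator

/-- `I + L` is invertible on `L²(0,1)` iff the linear boundary value
problem `ξ'' + b ξ' + a ξ = y`, `ξ(0)=ξ(1)=0` is uniquely solvable for every
`y ∈ L²(0,1)`. -/
theorem stmt17 (a b : ℝ → ℝ)
    (ha : ContinuousOn a (Set.Icc 0 1)) (hb : ContinuousOn b (Set.Icc 0 1))
    (L : Lp ℝ 2 (volume.restrict (Set.Ioo (0:ℝ) 1)) →L[ℝ]
      Lp ℝ 2 (volume.restrict (Set.Ioo (0:ℝ) 1)))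
    (hL : ∀ g : Lp ℝ 2 (volume.restrict (Set.Ioo (0:ℝ) 1)),
      ∀ᵐ t ∂(volume.restrict (Set.Ioo (0:ℝ) 1)),
        (L g : ℝ → ℝ) t = -(a t) * (∫ s in (0:ℝ)..1, Kgreen t s * (g : ℝ → ℝ) s)
          - b t * (∫ s in (0:ℝ)..1, KgreenT t s * (g : ℝ → ℝ) s)) :
    Function.Bijective
        (fun x : Lp ℝ 2 (volume.restrict (Set.Ioo (0:ℝ) 1)) => x + L x)
    ↔ ∀ y : Lp ℝ 2 (volume.restrict (Set.Ioo (0:ℝ) 1)),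
        (∃ ξ ξ' ξ'' : ℝ → ℝ, SolLinBVP a b (y : ℝ → ℝ) ξ ξ' ξ'') ∧
        (∀ ξ₁ ξ₁' ξ₁'' ξ₂ ξ₂' ξ₂'' : ℝ → ℝ,
          SolLinBVP a b (y : ℝ → ℝ) ξ₁ ξ₁' ξ₁'' →
          SolLinBVP a b (y : ℝ → ℝ) ξ₂ ξ₂' ξ₂'' →
          Set.EqOn ξ₁ ξ₂ (Set.Icc 0 1)) := by
  have hsol : ∀ x y : L², x + L x = -y →
      SolLinBVP a b y (kernelOp Kgreen x) (kernelOp KgreenT x) (-x) := fun x y hxy =>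
    solLinBVP_kernelOp (Lp.intervalIntegrable zero_le_one x) ((add_apply_eq_neg_iff hL x y).1 hxy)
  constructor
  · intro hbij y
    obtain ⟨x, hx⟩ := hbij.2 (-y)
    refine ⟨⟨_, _, _, hsol x y hx⟩, fun ξ₁ _ _ ξ₂ _ _ h₁ h₂ => ?_⟩
    obtain ⟨x₁, hx₁, hξ₁⟩ := h₁.exists_add_apply_eq_neg hL ha hb
    obtain ⟨x₂, hx₂, hξ₂⟩ := h₂.exists_add_apply_eq_neg hL ha hb
    obtain rfl : x₁ = x₂ := hbij.1 (hx₁.trans hx₂.symm)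
    exact hξ₁.trans hξ₂.symm
  · intro huniq
    refine ⟨fun x₁ x₂ h => eq_of_add_apply_eq_of_eqOn hL h ((huniq _).2 _ _ _ _ _ _
      (hsol x₁ _ (neg_neg _).symm) (hsol x₂ _ (h.symm.trans (neg_neg _).symm))), fun y => ?_⟩
    obtain ⟨⟨ξ, ξ', ξ'', hξ⟩, -⟩ := huniq (-y)
    obtain ⟨x, hx, -⟩ := hξ.exists_add_apply_eq_neg hL ha hb
    exact ⟨x, hx.trans (neg_neg y)⟩
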